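/- arXiv:1001.1495 — 4 statements merged into one kernel-verified Lean document; each statement's English description precedes it below -/
import Mathlib

section
/- For all real x with 0 < x < 1, one has (x - 1)(x^2 + 2x - 1) - (x + 1)(x^2 + 1) * log((x^2 + 1)/(x + 1)) > 0. -/
/-!
Bounding the logarithm by its tangent line at `1`, `log t ≤ t - 1`, with `t = (x² + 1)/(x + 1)`
gives `(x + 1) log t ≤ x² - x`, and the expression is then at least `(1 - x)³ (x + 1) > 0`.
-/

namespace Real

theorem mul_log_div_le_sub {a b : ℝ} (ha : 0 < a) (hb : 0 < b) : b * log (a / b) ≤ a - b := by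
  calc b * log (a / b) ≤ b * (a / b - 1) :=
        mul_le_mul_of_nonneg_left (log_le_sub_one_of_pos (div_pos ha hb)) hb.le
    _ = a - b := by field_simp

end Real

theorem stmt_1 (x : ℝ) (hx0 : 0 < x) (hx1 : x < 1) :
    (x - 1) * (x^2 + 2*x - 1)
      - (x + 1) * (x^2 + 1) * Real.log ((x^2 + 1) / (x + 1)) > 0 := by
  have hlog : (x + 1) * Real.log ((x^2 + 1) / (x + 1)) ≤ (x^2 + 1) - (x + 1) :=
    Real.mul_log_div_le_sub (by positivity) (by positivity)
  have h1x : 0 < 1 - x := by linarith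
  calc (x - 1) * (x^2 + 2*x - 1) - (x + 1) * (x^2 + 1) * Real.log ((x^2 + 1) / (x + 1))
      ≥ (x - 1) * (x^2 + 2*x - 1) - (x^2 + 1) * ((x^2 + 1) - (x + 1)) := by
        linarith [mul_le_mul_of_nonneg_left hlog (by positivity : (0:ℝ) ≤ x^2 + 1)]
    _ = (1 - x)^3 * (x + 1) := by ring
    _ > 0 := by positivity
end

section
/- For every real x > 0 and every positive integer k, the inequality (k-1)!/x^k + k!/(2 x^(k+1)) < (-1)^(k+1) * ψ^(k)(x) holds, where ψ^(k) denotes the k-th derivative of the digamma function. -/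
/-!
For `k ≥ 1` one has `ψ⁽ᵏ⁾(x) = (-1)^(k+1) k! ∑ₙ (x + n)^-(k+1)`, obtained by differentiating Gauss's
limit formula for `log Γ` termwise. After multiplying by `(-1)^(k+1)` and dividing by `k!`, the claim
becomes `x^-k / k + x^-(k+1) / 2 < ∑ₙ (x + n)^-(k+1)`. The left side telescopes as
`∑ₙ (φ n - φ (n + 1))` with `φ n = (x + n)^-k / k + (x + n)^-(k+1) / 2`, and each difference is
smaller than `(x + n)^-(k+1)` by the trapezoid rule for the strictly convex `t ↦ t^-(k+1)` on
`[x + n, x + n + 1]`.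
-/

open Real Filter Topology Finset

/-- The digamma function ψ = (log ∘ Γ)'. -/
noncomputable def digamma : ℝ → ℝ := deriv fun x => Real.log (Real.Gamma x)

/-- The k-th derivative of the digamma function. -/
noncomputable def polygamma (k : ℕ) : ℝ → ℝ := iteratedDeriv k digamma

lemma pow_mul_pow_add_pow_mul_pow_lt {u v : ℝ} (hv : 0 ≤ v) (hvu : v < u) {a b : ℕ}
    (ha : a ≠ 0) (hb : b ≠ 0) : u ^ a * v ^ b + u ^ b * v ^ a < u ^ (a + b) + v ^ (a + b) := by
  have := mul_pos (sub_pos.2 (pow_lt_pow_left₀ hvu hv ha)) (sub_pos.2 (pow_lt_pow_left₀ hvu hv hb))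
  rw [pow_add, pow_add]
  linarith

lemma two_mul_mul_geom_sum₂_lt {u v : ℝ} (hv : 0 ≤ v) (hvu : v < u) {k : ℕ} (hk : k ≠ 0) :
    2 * (u * v) * ∑ i ∈ range k, u ^ i * v ^ (k - 1 - i) < k * (u ^ (k + 1) + v ^ (k + 1)) := by
  have hterm : ∀ i ∈ range k, u * v * (u ^ i * v ^ (k - 1 - i)) = u ^ (i + 1) * v ^ (k - i) := by
    intro i hi
    rw [show k - i = k - 1 - i + 1 by grind]
    ring
  have hreflect : ∑ i ∈ range k, u ^ (i + 1) * v ^ (k - i)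
      = ∑ i ∈ range k, u ^ (k - i) * v ^ (i + 1) := by
    rw [← sum_range_reflect]
    refine sum_congr rfl fun i hi => ?_
    rw [show k - 1 - i + 1 = k - i by grind, show k - (k - 1 - i) = i + 1 by grind]
  have hpair : ∀ i ∈ range k, u ^ (i + 1) * v ^ (k - i) + u ^ (k - i) * v ^ (i + 1)
      < u ^ (k + 1) + v ^ (k + 1) := by
    intro i hi
    have hik : i < k := mem_range.1 hi
    have := pow_mul_pow_add_pow_mul_pow_lt hv hvu (a := i + 1) (b := k - i) (by omega) (by omega)
    rwa [show i + 1 + (k - i) = k + 1 by omega] at this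
  calc 2 * (u * v) * ∑ i ∈ range k, u ^ i * v ^ (k - 1 - i)
      = ∑ i ∈ range k, (u ^ (i + 1) * v ^ (k - i) + u ^ (k - i) * v ^ (i + 1)) := by
        rw [sum_add_distrib, ← hreflect, mul_assoc, mul_sum, sum_congr rfl hterm]; ring
    _ < ∑ _i ∈ range k, (u ^ (k + 1) + v ^ (k + 1)) :=
        sum_lt_sum_of_nonempty (nonempty_range_iff.2 hk) hpair
    _ = k * (u ^ (k + 1) + v ^ (k + 1)) := by rw [sum_const, card_range, nsmul_eq_mul]

lemma inv_pow_sub_inv_pow_lt {y : ℝ} (hy : 0 < y) {k : ℕ} (hk : k ≠ 0) :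
    (k : ℝ)⁻¹ * ((y ^ k)⁻¹ - ((y + 1) ^ k)⁻¹) < ((y ^ (k + 1))⁻¹ + ((y + 1) ^ (k + 1))⁻¹) / 2 := by
  have hvu : (y + 1)⁻¹ < y⁻¹ := inv_strictAnti₀ hy (lt_add_one y)
  have hmain := two_mul_mul_geom_sum₂_lt (by positivity) hvu hk
  have hgeom := geom_sum₂_mul y⁻¹ (y + 1)⁻¹ k
  have hdiff : y⁻¹ - (y + 1)⁻¹ = y⁻¹ * (y + 1)⁻¹ := by field_simp; ring
  rw [hdiff] at hgeom
  simp only [inv_pow] at hmain hgeom ⊢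
  have hk' : (0 : ℝ) < k := by positivity
  rw [inv_mul_lt_iff₀ hk']
  linarith

lemma hasSum_sub_succ_of_antitone {φ : ℕ → ℝ} {l : ℝ} (hφ : Antitone φ)
    (hlim : Tendsto φ atTop (𝓝 l)) : HasSum (fun n => φ n - φ (n + 1)) (φ 0 - l) := by
  rw [hasSum_iff_tendsto_nat_of_nonneg fun n => sub_nonneg.2 (hφ n.le_succ)]
  simpa only [sum_range_sub'] using tendsto_const_nhds.sub hlim

noncomputable def hurwitzSeries (m : ℕ) (x : ℝ) : ℝ := ∑' n : ℕ, ((x + n) ^ m)⁻¹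

lemma summable_inv_add_nat_pow (c : ℝ) {m : ℕ} (hm : 2 ≤ m) :
    Summable fun n : ℕ => ((c + n) ^ m)⁻¹ := by
  refine Summable.of_norm ?_
  have := (Real.summable_one_div_nat_add_rpow c m).2 (by exact_mod_cast hm)
  simpa [add_comm, Real.rpow_natCast] using this

lemma hasDerivAt_inv_add_pow (m : ℕ) (c : ℝ) {y : ℝ} (hy : y + c ≠ 0) :
    HasDerivAt (fun z => ((z + c) ^ m)⁻¹) (-m * ((y + c) ^ (m + 1))⁻¹) y := by
  have h := (hasDerivAt_zpow (-m) (y + c) (Or.inl hy)).comp y ((hasDerivAt_id y).add_const c)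
  simp only [zpow_neg, zpow_natCast, Function.comp_def, id, mul_one] at h
  refine h.congr_deriv ?_
  rw [show (-(m : ℤ) - 1) = -((m + 1 : ℕ) : ℤ) by push_cast; ring, zpow_neg, zpow_natCast]
  push_cast; ring

lemma hasDerivAt_hurwitzSeries {m : ℕ} (hm : 2 ≤ m) {x : ℝ} (hx : 0 < x) :
    HasDerivAt (hurwitzSeries m) (-m * hurwitzSeries (m + 1) x) x := by
  have hx2 : 0 < x / 2 := half_pos hx
  have h := hasDerivAt_tsum_of_isPreconnected (t := Set.Ioi (x / 2)) (y₀ := x)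
    (g := fun (n : ℕ) (z : ℝ) => ((z + n) ^ m)⁻¹)
    (g' := fun (n : ℕ) (z : ℝ) => -(m : ℝ) * ((z + n) ^ (m + 1))⁻¹)
    ((summable_inv_add_nat_pow (x / 2) (by omega : 2 ≤ m + 1)).mul_left (m : ℝ)) isOpen_Ioi
    isPreconnected_Ioi
    (fun n y hy => hasDerivAt_inv_add_pow m n (by positivity [hx2.trans hy]))
    (fun n y hy => by
      rw [norm_mul, norm_neg, Real.norm_natCast, norm_inv, norm_pow,
        Real.norm_of_nonneg (by positivity [hx2.trans hy])]
      gcongr; exact le_of_lt hy)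
    (half_lt_self hx) (summable_inv_add_nat_pow x hm) (half_lt_self hx)
  rwa [tsum_mul_left] at h

lemma inv_pow_add_div_two_lt_hurwitzSeries {x : ℝ} (hx : 0 < x) {k : ℕ} (hk : k ≠ 0) :
    (k : ℝ)⁻¹ * (x ^ k)⁻¹ + (x ^ (k + 1))⁻¹ / 2 < hurwitzSeries (k + 1) x := by
  set φ : ℕ → ℝ := fun n => (k : ℝ)⁻¹ * ((x + n) ^ k)⁻¹ + ((x + n) ^ (k + 1))⁻¹ / 2
  have hφ : Antitone φ := fun a b hab => by simp only [φ]; gcongr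
  have hlim : Tendsto φ atTop (𝓝 0) := by
    have h : ∀ j ≠ 0, Tendsto (fun n : ℕ => ((x + n) ^ j)⁻¹) atTop (𝓝 0) := fun j hj =>
      tendsto_inv_atTop_zero.comp <| (tendsto_pow_atTop hj).comp <|
        tendsto_atTop_add_const_left _ x tendsto_natCast_atTop_atTop
    simpa using ((h k hk).const_mul (k : ℝ)⁻¹).add ((h (k + 1) k.succ_ne_zero).div_const 2)
  have hstep : ∀ n, φ n - φ (n + 1) < ((x + n) ^ (k + 1))⁻¹ := fun n => by
    have := inv_pow_sub_inv_pow_lt (y := x + n) (by positivity) hk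
    simp only [φ, Nat.cast_succ, ← add_assoc]
    linarith
  have := hasSum_lt (fun n => (hstep n).le) (hstep 0) (hasSum_sub_succ_of_antitone hφ hlim)
    (summable_inv_add_nat_pow x (by omega)).hasSum
  simpa [φ, hurwitzSeries] using this

noncomputable def digammaTerm (x : ℝ) (n : ℕ) : ℝ := ((n : ℝ) + 1)⁻¹ - (x + n)⁻¹

lemma abs_digammaTerm_le {c y : ℝ} (hc : 0 < c) (hc1 : c ≤ 1) (hcy : c ≤ y) (n : ℕ) :
    |digammaTerm y n| ≤ |y - 1| * ((c + n) ^ 2)⁻¹ := by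
  have hy : 0 < y + n := by positivity [hc.trans_le hcy]
  have hsq : (c + n) ^ 2 ≤ (n + 1) * (y + n) := by
    rw [sq]; exact mul_le_mul (by linarith) (by linarith) (by positivity) (by positivity)
  rw [digammaTerm, show ((n : ℝ) + 1)⁻¹ - (y + n)⁻¹ = (y - 1) * ((n + 1) * (y + n))⁻¹ by
    field_simp; ring, abs_mul, abs_of_pos (by positivity : 0 < ((n + 1) * (y + n) : ℝ)⁻¹)]
  gcongr

lemma summable_digammaTerm {y : ℝ} (hy : 0 < y) : Summable (digammaTerm y) :=
  .of_norm_bounded ((summable_inv_add_nat_pow (min y 1) le_rfl).mul_left |y - 1|)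
    (abs_digammaTerm_le (lt_min hy one_pos) (min_le_right _ _) (min_le_left _ _))

lemma hasDerivAt_tsum_digammaTerm {x : ℝ} (hx : 0 < x) :
    HasDerivAt (fun y => ∑' n, digammaTerm y n) (hurwitzSeries 2 x) x := by
  have hx2 : 0 < x / 2 := half_pos hx
  refine hasDerivAt_tsum_of_isPreconnected (t := Set.Ioi (x / 2)) (y₀ := x)
    (g' := fun (n : ℕ) (z : ℝ) => ((z + n) ^ 2)⁻¹)
    (summable_inv_add_nat_pow (x / 2) le_rfl) isOpen_Ioi isPreconnected_Ioi
    (fun n y hy => ?_) (fun n y hy => ?_) (half_lt_self hx) (summable_digammaTerm hx)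
    (half_lt_self hx)
  · have hy : y + n ≠ 0 := by positivity [hx2.trans hy]
    simpa [digammaTerm] using (hasDerivAt_inv_add_pow 1 (n : ℝ) hy).const_sub ((n : ℝ) + 1)⁻¹
  · rw [Real.norm_of_nonneg (by positivity [hx2.trans hy])]
    gcongr; exact le_of_lt hy

lemma hasDerivAt_logGammaSeq {y : ℝ} (hy : 0 < y) (N : ℕ) :
    HasDerivAt (fun z => BohrMollerup.logGammaSeq z N)
      (log N - harmonic (N + 1) + ∑ n ∈ range (N + 1), digammaTerm y n) y := by
  have hlog : ∀ n ∈ range (N + 1), HasDerivAt (fun z => log (z + n)) (y + n)⁻¹ y := fun n _ =>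
    ((hasDerivAt_id y).add_const (n : ℝ)).log (by positivity) |>.congr_deriv (one_div _)
  have h := (((hasDerivAt_id y).mul_const (log N)).add_const (log N.factorial)).sub
    (HasDerivAt.fun_sum hlog)
  refine h.congr_deriv ?_
  simp only [digammaTerm, sum_sub_distrib, harmonic, one_mul]
  push_cast
  ring

lemma tendsto_log_sub_harmonic_succ :
    Tendsto (fun N : ℕ => log N - harmonic (N + 1)) atTop (𝓝 (-eulerMascheroniConstant)) := by
  have h := (tendsto_harmonic_sub_log.add tendsto_one_div_add_atTop_nhds_zero_nat).neg
  rw [add_zero] at h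
  refine h.congr fun N => ?_
  push_cast [harmonic_succ]
  ring

lemma digamma_eq_tsum {x : ℝ} (hx : 0 < x) :
    digamma x = -eulerMascheroniConstant + ∑' n, digammaTerm x n := by
  have hx2 : 0 < x / 2 := half_pos hx
  set s := Set.Ioo (x / 2) (2 * x)
  have hs : ∀ y ∈ s, 0 < y := fun y hy => hx2.trans hy.1
  have hseries : TendstoUniformlyOn (fun N y => ∑ n ∈ range N, digammaTerm y n)
      (fun y => ∑' n, digammaTerm y n) atTop s := by
    refine tendstoUniformlyOn_tsum_nat
      ((summable_inv_add_nat_pow (min (x / 2) 1) le_rfl).mul_left (2 * x + 1)) fun n y hy => ?_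
    refine (abs_digammaTerm_le (lt_min hx2 one_pos) (min_le_right _ _)
      ((min_le_left _ _).trans hy.1.le) n).trans ?_
    gcongr
    rw [abs_le]; constructor <;> linarith [hy.1, hy.2]
  have hderiv : TendstoUniformlyOn
      (fun (N : ℕ) y => log N - harmonic (N + 1) + ∑ n ∈ range (N + 1), digammaTerm y n)
      (fun y => -eulerMascheroniConstant + ∑' n, digammaTerm y n) atTop s :=
    (tendsto_log_sub_harmonic_succ.tendstoUniformlyOn_const s).add
      fun u hu => tendsto_add_atTop_nat 1 (hseries u hu)
  exact (hasDerivAt_of_tendstoUniformlyOn (f := fun N y => BohrMollerup.logGammaSeq y N)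
    (g := fun y => log (Gamma y)) isOpen_Ioo hderiv
    (.of_forall fun N y hy => hasDerivAt_logGammaSeq (hs y hy) N)
    (fun y hy => BohrMollerup.tendsto_log_gamma (hs y hy)) ⟨half_lt_self hx, by linarith⟩).deriv

lemma polygamma_eq_hurwitzSeries {k : ℕ} (hk : k ≠ 0) {x : ℝ} (hx : 0 < x) :
    polygamma k x = (-1) ^ (k + 1) * k.factorial * hurwitzSeries (k + 1) x := by
  induction k, Nat.one_le_iff_ne_zero.2 hk using Nat.le_induction generalizing x with
  | base =>
    have hψ : digamma =ᶠ[𝓝 x] fun y => -eulerMascheroniConstant + ∑' n, digammaTerm y n :=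
      eventually_of_mem (Ioi_mem_nhds hx) fun y hy => digamma_eq_tsum hy
    rw [polygamma, iteratedDeriv_one, hψ.deriv_eq,
      ((hasDerivAt_tsum_digammaTerm hx).const_add _).deriv]
    norm_num
  | succ k hk ih =>
    have hψ : polygamma k =ᶠ[𝓝 x] fun y => (-1) ^ (k + 1) * k.factorial * hurwitzSeries (k + 1) y :=
      eventually_of_mem (Ioi_mem_nhds hx) fun y hy => ih (by omega) hy
    rw [polygamma, iteratedDeriv_succ, ← polygamma, hψ.deriv_eq,
      ((hasDerivAt_hurwitzSeries (by omega) hx).const_mul _).deriv, Nat.factorial_succ]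
    push_cast
    ring

theorem stmt_5 (x : ℝ) (hx : 0 < x) (k : ℕ) (hk : 0 < k) :
    ((k - 1).factorial : ℝ) / x ^ k + (k.factorial : ℝ) / (2 * x ^ (k + 1)) < (-1) ^ (k + 1) * polygamma k x := by
  have hsign : ((-1 : ℝ) ^ (k + 1)) * (-1) ^ (k + 1) = 1 := by rw [← mul_pow]; norm_num
  have hfact : ((k - 1).factorial : ℝ) = k.factorial * (k : ℝ)⁻¹ := by
    rw [← Nat.mul_factorial_pred hk.ne', Nat.cast_mul]
    field_simp
  rw [polygamma_eq_hurwitzSeries hk.ne' hx, ← mul_assoc, ← mul_assoc, hsign, one_mul]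
  calc ((k - 1).factorial : ℝ) / x ^ k + (k.factorial : ℝ) / (2 * x ^ (k + 1))
      = k.factorial * ((k : ℝ)⁻¹ * (x ^ k)⁻¹ + (x ^ (k + 1))⁻¹ / 2) := by
        rw [hfact]; ring
    _ < k.factorial * hurwitzSeries (k + 1) x := by
        gcongr; exact inv_pow_add_div_two_lt_hurwitzSeries hx hk.ne'
end

section
/- The limit as x tends to 1 from the left of log(Γ(x+1)) / (log(x^2+1) - log(x+1)) equals 2(1 - γ), where γ is the Euler–Mascheroni constant. -/
/-! Numerator and denominator both vanish at `1`, so the quotient tends to the ratio of their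
derivatives there: `Γ'(2) / Γ(2) = ψ(2) = 1 - γ` over `2 / 2 - 1 / 2 = 1 / 2`. -/

open Filter Topology

theorem HasDerivAt.tendsto_div_of_eq_zero {𝕜 : Type*} [NontriviallyNormedField 𝕜]
    {f g : 𝕜 → 𝕜} {f' g' a : 𝕜} (hf : HasDerivAt f f' a) (hg : HasDerivAt g g' a)
    (hfa : f a = 0) (hga : g a = 0) (hg' : g' ≠ 0) :
    Tendsto (fun x => f x / g x) (𝓝[≠] a) (𝓝 (f' / g')) := by
  have hslope := (hasDerivAt_iff_tendsto_slope.mp hf).div (hasDerivAt_iff_tendsto_slope.mp hg) hg'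
  refine hslope.congr' (eventually_nhdsWithin_of_forall fun x hx => ?_)
  change slope f a x / slope g a x = f x / g x
  rw [slope_def_field, slope_def_field, hfa, hga, sub_zero, sub_zero,
    div_div_div_cancel_right₀ (sub_ne_zero.mpr hx)]

namespace Real

theorem hasDerivAt_log_Gamma_add_one_one :
    HasDerivAt (fun x => log (Gamma (x + 1))) (1 - eulerMascheroniConstant) 1 := by
  have hGamma : HasDerivAt Gamma (1 - eulerMascheroniConstant) (1 + 1) := by
    simpa [harmonic_succ, neg_add_eq_sub] using hasDerivAt_Gamma_nat 1
  have hGamma_two : Gamma (1 + 1) = 1 := by norm_num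
  simpa [hGamma_two] using
    ((hGamma.comp_add_const 1).log (by norm_num [hGamma_two]))

theorem hasDerivAt_log_sq_add_one_sub_log_add_one_one :
    HasDerivAt (fun x => log (x ^ 2 + 1) - log (x + 1)) (1 / 2) 1 := by
  have hsq : HasDerivAt (fun x : ℝ => x ^ 2 + 1) 2 1 := by
    simpa using (hasDerivAt_pow 2 (1 : ℝ)).add_const 1
  have hlin : HasDerivAt (fun x : ℝ => x + 1) 1 1 := (hasDerivAt_id 1).add_const 1
  exact ((hsq.log (by norm_num)).fun_sub (hlin.log (by norm_num))).congr_deriv (by norm_num)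

end Real

theorem stmt_10 :
    Filter.Tendsto
      (fun x : ℝ => Real.log (Real.Gamma (x + 1)) / (Real.log (x^2 + 1) - Real.log (x + 1)))
      (nhdsWithin 1 (Set.Iio 1)) (nhds (2 * (1 - Real.eulerMascheroniConstant))) := by
  have h := Real.hasDerivAt_log_Gamma_add_one_one.tendsto_div_of_eq_zero
    Real.hasDerivAt_log_sq_add_one_sub_log_add_one_one (by norm_num) (by norm_num) (by norm_num)
  rw [div_div_eq_mul_div, div_one, mul_comm] at h
  exact h.mono_left (nhdsWithin_mono _ fun x hx => ne_of_lt hx)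
end

section
/- For all real x with x > 1/2, one has Γ(x+1) < (2x)^x. -/
open Real

/-- On `[0, 1]`, `Γ(x+1) ≤ 1` by convexity of `Γ` between `Γ(1)=1` and `Γ(2)=1`. -/
lemma gamma_aux_le_one {x : ℝ} (h0 : 0 ≤ x) (h1 : x ≤ 1) : Real.Gamma (x + 1) ≤ 1 := by
  have hconv := Real.convexOn_Gamma
  have h := hconv.2 (show (1:ℝ) ∈ Set.Ioi 0 by norm_num) (show (2:ℝ) ∈ Set.Ioi 0 by norm_num)
    (show (0:ℝ) ≤ 1 - x by linarith) h0 (show (1 - x) + x = 1 by ring)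
  simp only [smul_eq_mul] at h
  have e1 : (1 - x) * (1:ℝ) + x * 2 = x + 1 := by ring
  rw [e1, Real.Gamma_one, Real.Gamma_two] at h
  linarith

/-- On `[1, 2]`, `Γ(x+1) ≤ x` by convexity of `Γ` between `Γ(2)=1` and `Γ(3)=2`. -/
lemma gamma_aux_le_self {x : ℝ} (h1 : 1 ≤ x) (h2 : x ≤ 2) : Real.Gamma (x + 1) ≤ x := by
  have hconv := Real.convexOn_Gamma
  have hG3 : Real.Gamma 3 = 2 := by
    rw [show (3:ℝ) = (2:ℕ) + 1 by norm_num, Real.Gamma_nat_eq_factorial]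
    norm_num
  have h := hconv.2 (show (2:ℝ) ∈ Set.Ioi 0 by norm_num) (show (3:ℝ) ∈ Set.Ioi 0 by norm_num)
    (show (0:ℝ) ≤ 2 - x by linarith) (show (0:ℝ) ≤ x - 1 by linarith)
    (show (2 - x) + (x - 1) = 1 by ring)
  simp only [smul_eq_mul] at h
  have e1 : (2 - x) * (2:ℝ) + (x - 1) * 3 = x + 1 := by ring
  rw [e1, Real.Gamma_two, hG3] at h
  linarith

lemma gamma_aux (n : ℕ) : ∀ x : ℝ, 1 / 2 < x → x ≤ n + 2 →
    Real.Gamma (x + 1) < (2 * x) ^ x := by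
  induction n with
  | zero =>
    intro x hx hxn
    norm_num at hxn
    rcases le_or_gt x 1 with h1 | h1
    · have hle : Real.Gamma (x + 1) ≤ 1 := gamma_aux_le_one (by linarith) h1
      have hgt : (1:ℝ) < (2 * x) ^ x := by
        rw [show (1:ℝ) = (2*x) ^ (0:ℝ) by simp]
        exact Real.rpow_lt_rpow_of_exponent_lt (by linarith) (by linarith)
      linarith
    · have hle : Real.Gamma (x + 1) ≤ x := gamma_aux_le_self h1.le hxn
      have hgt : x < (2 * x) ^ x := by
        have h2 : (2*x) ^ (1:ℝ) ≤ (2*x) ^ x :=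
          Real.rpow_le_rpow_of_exponent_le (by linarith) h1.le
        rw [Real.rpow_one] at h2
        linarith
      linarith
  | succ n ih =>
    intro x hx hxn
    rcases le_or_gt x (n + 2) with h | h
    · exact ih x hx h
    · have hn2 : (2:ℝ) ≤ (n:ℝ) + 2 := by have : (0:ℝ) ≤ (n:ℝ) := Nat.cast_nonneg n; linarith
      have hx2 : (2:ℝ) < x := lt_of_le_of_lt hn2 h
      have hIH : Real.Gamma ((x - 1) + 1) < (2 * (x - 1)) ^ (x - 1) := by
        apply ih (x - 1) (by linarith)
        push_cast at hxn ⊢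
        linarith
      rw [sub_add_cancel] at hIH
      have hrec : Real.Gamma (x + 1) = x * Real.Gamma x :=
        Real.Gamma_add_one (by linarith)
      have h1 : x * Real.Gamma x < x * (2 * (x - 1)) ^ (x - 1) :=
        mul_lt_mul_of_pos_left hIH (by linarith)
      have h2 : (2 * (x - 1)) ^ (x - 1) ≤ (2 * x) ^ (x - 1) :=
        Real.rpow_le_rpow (by linarith) (by linarith) (by linarith)
      have h3 : (2 * x) ^ x = (2 * x) ^ (x - 1) * (2 * x) := by
        rw [← Real.rpow_add_one (by linarith : (2*x) ≠ 0) (x - 1), sub_add_cancel]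
      have hpos : (0:ℝ) < (2 * x) ^ (x - 1) := Real.rpow_pos_of_pos (by linarith) _
      rw [hrec]
      calc x * Real.Gamma x < x * (2 * (x - 1)) ^ (x - 1) := h1
        _ ≤ x * (2 * x) ^ (x - 1) := by nlinarith
        _ < (2 * x) * (2 * x) ^ (x - 1) := by nlinarith
        _ = (2 * x) ^ x := by rw [h3]; ring

theorem stmt_19 (x : ℝ) (hx : 1 / 2 < x) : Real.Gamma (x + 1) < (2 * x) ^ x := by
  refine gamma_aux ⌈x⌉₊ x hx ?_
  calc x ≤ ⌈x⌉₊ := Nat.le_ceil x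
    _ ≤ ⌈x⌉₊ + 2 := by linarith
end
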